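/- arXiv:0806.3641 — 3 statements merged into one kernel-verified Lean document; each statement's English description precedes it below -/
import Mathlib

section
/- The Bell polynomials B_n(q) = Σ_{k=0}^n S(n,k)q^k, where S(n,k) are the Stirling numbers of the second kind, are strongly q-log-convex: for all n ≥ m ≥ 1, the polynomial B_{m-1}(q)·B_{n+1}(q) − B_m(q)·B_n(q) has only nonnegative coefficients. -/
open Polynomial

/-- The Stirling numbers of the second kind: `S(0,0) = 1`, `S(n,k) = 0` for `k > n`,
and `S(n,k) = k·S(n-1,k) + S(n-1,k-1)` for `n, k ≥ 1`. -/
def stirling2 : ℕ → ℕ → ℕ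
  | 0, 0 => 1
  | 0, _ + 1 => 0
  | _ + 1, 0 => 0
  | n + 1, k + 1 => (k + 1) * stirling2 n (k + 1) + stirling2 n k

/-- The Bell polynomial `B_n(q) = Σ_{k=0}^n S(n,k) q^k`. -/
noncomputable def bellPoly (n : ℕ) : Polynomial ℝ :=
  ∑ k ∈ Finset.range (n + 1), C ((stirling2 n k : ℝ)) * X ^ k

/-!
Since `B_{n+1} = q (B_n + B_n')`, the coefficient of `q^i` in `B_a B_{b+1} - B_{a+1} B_b` is
`∑_{j+k=i} (k - j) S(a,j) S(b,k)`. Pairing `(j,k)` with `(k,j)` rewrites twice this sum as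
`∑ (k - j) (S(a,j) S(b,k) - S(a,k) S(b,j))`, whose terms are nonnegative because the Stirling
triangle is totally positive of order 2: `S(a,k) S(b,j) ≤ S(a,j) S(b,k)` for `a ≤ b` and `j ≤ k`.
That in turn follows from the recurrence, first within a row (log-concavity), then between
consecutive rows, and finally by chaining the ratios `S(·,k) / S(·,j)` from row `a` to row `b`.
-/

open Finset

local notation "S" => Nat.stirlingSecond

theorem stirlingSecond_pos : ∀ {n k : ℕ}, 0 < k → k ≤ n → 0 < S n k
  | 0, _, hk, hkn | _ + 1, 0, hk, hkn => by omega
  | n + 1, 1, _, _ => by rw [Nat.stirlingSecond_one_right]; exact one_pos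
  | n + 1, k + 2, _, hkn => by
    have := stirlingSecond_pos (n := n) (k := k + 1) k.succ_pos (by omega)
    rw [Nat.stirlingSecond_succ_succ]
    positivity

theorem stirlingSecond_mul_succ_le_succ_mul :
    ∀ {n j k : ℕ}, j ≤ k → S n j * S n (k + 1) ≤ S n (j + 1) * S n k
  | 0, _, _, _ => by simp [Nat.stirlingSecond_eq_zero_of_lt]
  | _ + 1, 0, _, _ => by simp
  | n + 1, p + 1, q + 1, hpq => by
    rcases (Nat.le_of_succ_le_succ hpq).eq_or_lt with rfl | hlt
    · rw [mul_comm]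
    have h₁ := stirlingSecond_mul_succ_le_succ_mul (n := n) (j := p) (k := q + 1) (by omega)
    have h₂ := stirlingSecond_mul_succ_le_succ_mul (n := n) (j := p + 1) (k := q + 1) (by omega)
    have h₃ := stirlingSecond_mul_succ_le_succ_mul (n := n) (j := p) (k := q) (by omega)
    have h₄ := stirlingSecond_mul_succ_le_succ_mul (n := n) (j := p + 1) (k := q) (by omega)
    have h₅ : p * S n (p + 2) * S n (q + 1) ≤ q * S n (p + 2) * S n (q + 1) := by gcongr
    simp only [Nat.stirlingSecond_succ_succ]
    zify at *
    linear_combination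
      ((p : ℤ) + 1) * ((q : ℤ) + 2) * h₂ + ((q : ℤ) + 2) * h₁ + h₃ + ((p : ℤ) + 2) * h₄ + h₅

theorem stirlingSecond_mul_stirlingSecond_succ_le {n j k : ℕ} (hjk : j ≤ k) :
    S n k * S (n + 1) j ≤ S n j * S (n + 1) k := by
  rcases j with _ | p
  · simp
  rcases k with _ | q
  · omega
  have h₁ : (p + 1) * S n (p + 1) * S n (q + 1) ≤ (q + 1) * S n (p + 1) * S n (q + 1) := by gcongr
  have h₂ := stirlingSecond_mul_succ_le_succ_mul (n := n) (Nat.le_of_succ_le_succ hjk)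
  simp only [Nat.stirlingSecond_succ_succ]
  zify at *
  linear_combination h₁ + h₂

theorem cross_mul_le_trans {R : Type*} [CommSemiring R] [LinearOrder R] [IsStrictOrderedRing R]
    {x₁ x₂ y₁ y₂ z₁ z₂ : R} (hxy : x₂ * y₁ ≤ x₁ * y₂) (hyz : y₂ * z₁ ≤ y₁ * z₂)
    (hx₁ : 0 ≤ x₁) (hy₁ : 0 < y₁) (hy₂ : 0 < y₂) (hz₁ : 0 ≤ z₁) : x₂ * z₁ ≤ x₁ * z₂ := by
  refine le_of_mul_le_mul_right ?_ (mul_pos hy₁ hy₂)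
  calc x₂ * z₁ * (y₁ * y₂) = x₂ * y₁ * (y₂ * z₁) := by ring
    _ ≤ x₁ * y₂ * (y₂ * z₁) := by gcongr
    _ ≤ x₁ * y₂ * (y₁ * z₂) := by gcongr
    _ = x₁ * z₂ * (y₁ * y₂) := by ring

theorem stirlingSecond_mul_le_mul_of_le {a b j k : ℕ} (hab : a ≤ b) (hjk : j ≤ k) :
    S a k * S b j ≤ S a j * S b k := by
  induction b, hab using Nat.le_induction with
  | base => rw [mul_comm]
  | succ b hab ih =>
    rcases Nat.eq_zero_or_pos j with rfl | hj
    · simp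
    by_cases hkb : b < k
    · simp [Nat.stirlingSecond_eq_zero_of_lt (hab.trans_lt hkb)]
    exact cross_mul_le_trans ih (stirlingSecond_mul_stirlingSecond_succ_le hjk) (Nat.zero_le _)
      (stirlingSecond_pos hj (by omega)) (stirlingSecond_pos (by omega) (by omega)) (Nat.zero_le _)

theorem sum_antidiagonal_sub_mul_mul_nonneg {R : Type*} [CommRing R] [LinearOrder R]
    [IsStrictOrderedRing R] {u v : ℕ → R} (huv : ∀ ⦃j k⦄, j ≤ k → u k * v j ≤ u j * v k)
    (n : ℕ) : 0 ≤ ∑ p ∈ antidiagonal n, ((p.2 : R) - p.1) * u p.1 * v p.2 := by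
  set f : ℕ × ℕ → R := fun p ↦ ((p.2 : R) - p.1) * u p.1 * v p.2
  have hpair (j k : ℕ) : 0 ≤ f (j, k) + f (k, j) := by
    have hf : f (j, k) + f (k, j) = ((k : R) - j) * (u j * v k - u k * v j) := by ring
    rcases le_total j k with h | h
    · rw [hf]
      exact mul_nonneg (sub_nonneg.2 (by exact_mod_cast h)) (sub_nonneg.2 (huv h))
    · rw [hf]
      exact mul_nonneg_of_nonpos_of_nonpos (sub_nonpos.2 (by exact_mod_cast h))
        (sub_nonpos.2 (huv h))
  have htwice : 2 * ∑ p ∈ antidiagonal n, f p =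
      ∑ p ∈ antidiagonal n, (f p + f p.swap) := by
    rw [sum_add_distrib, Nat.sum_antidiagonal_swap, two_mul]
  have : 0 ≤ 2 * ∑ p ∈ antidiagonal n, f p :=
    htwice ▸ sum_nonneg fun p _ ↦ hpair p.1 p.2
  linarith

theorem coeff_X_mul_derivative {R : Type*} [Semiring R] (p : R[X]) (n : ℕ) :
    (X * derivative p).coeff n = n * p.coeff n := by
  cases n with
  | zero => simp
  | succ n => rw [coeff_X_mul, coeff_derivative, ← Nat.cast_succ, Nat.cast_comm]

theorem coeff_mul_X_derivative_sub {R : Type*} [CommRing R] (p q : R[X]) (n : ℕ) :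
    (p * (X * derivative q) - X * derivative p * q).coeff n =
      ∑ x ∈ antidiagonal n, ((x.2 : R) - x.1) * p.coeff x.1 * q.coeff x.2 := by
  rw [coeff_sub, coeff_mul, coeff_mul, ← sum_sub_distrib]
  refine sum_congr rfl fun x _ ↦ ?_
  rw [coeff_X_mul_derivative, coeff_X_mul_derivative]
  ring

theorem stirling2_eq_stirlingSecond : stirling2 = S := by
  funext n k
  induction n generalizing k with
  | zero => cases k <;> rfl
  | succ n ih => cases k <;> simp [stirling2, Nat.stirlingSecond_succ_succ, ih]

theorem bellPoly_coeff (n k : ℕ) : (bellPoly n).coeff k = S n k := by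
  rw [bellPoly, finsetSum_coeff, stirling2_eq_stirlingSecond]
  simp only [coeff_C_mul_X_pow, sum_ite_eq, mem_range]
  split_ifs with hk
  · rfl
  · rw [Nat.stirlingSecond_eq_zero_of_lt (by omega), Nat.cast_zero]

theorem bellPoly_succ (n : ℕ) :
    bellPoly (n + 1) = X * bellPoly n + X * derivative (bellPoly n) := by
  ext k
  rw [coeff_add, coeff_X_mul_derivative, bellPoly_coeff, bellPoly_coeff]
  cases k with
  | zero => simp
  | succ k => rw [coeff_X_mul, bellPoly_coeff, Nat.stirlingSecond_succ_succ]; push_cast; ring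

/-- The Bell polynomials are strongly `q`-log-convex: for all
`n ≥ m ≥ 1`, the polynomial `B_{m-1}·B_{n+1} − B_m·B_n` has nonnegative coefficients. -/
theorem bellPoly_strongly_q_log_convex :
    ∀ m n : ℕ, 1 ≤ m → m ≤ n →
      ∀ i : ℕ,
        0 ≤ (bellPoly (m - 1) * bellPoly (n + 1) - bellPoly m * bellPoly n).coeff i := by
  intro m n hm hmn i
  obtain ⟨a, rfl⟩ := Nat.exists_eq_add_of_le' hm
  have hdiff : bellPoly a * bellPoly (n + 1) - bellPoly (a + 1) * bellPoly n =
      bellPoly a * (X * derivative (bellPoly n)) - X * derivative (bellPoly a) * bellPoly n := by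
    rw [bellPoly_succ, bellPoly_succ]; ring
  rw [Nat.add_sub_cancel, hdiff, coeff_mul_X_derivative_sub]
  simp only [bellPoly_coeff]
  exact sum_antidiagonal_sub_mul_mul_nonneg (u := fun k ↦ (S a k : ℝ)) (v := fun k ↦ (S n k : ℝ))
    (fun j k hjk ↦ by exact_mod_cast stirlingSecond_mul_le_mul_of_le (by omega) hjk) i
end

section
/- The Bessel-type polynomials P_n(q) = Σ_{k=0}^n ((n+k)!/((n-k)!·k!))·q^k are strongly q-log-convex: for all n ≥ m ≥ 1, the polynomial P_{m-1}(q)·P_{n+1}(q) − P_m(q)·P_n(q) has only nonnegative coefficients. -/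
/-! Writing `D(m, n) = P_{m-1} P_{n+1} - P_m P_n`, the three-term recurrence
`P_{n+1} = (4n + 2) q P_n + P_{n-1}` (with `P_{-1} = P_0 = 1`), applied twice to each factor, gives
`D(m+2, n+2) = 4 (n - m + 1) q (P_{m+1} P_{n+2} - P_m P_{n+1}) + D(m, n)`.
The coefficients of `P_n` are nonnegative and increase with `n`, so the bracket has nonnegative
coefficients and nonnegativity passes from `D(m, n)` to `D(m+2, n+2)`. The base cases `m = 0, 1`
reduce to the same monotonicity. -/

open Polynomial

noncomputable def besselPoly (n : ℕ) : Polynomial ℝ :=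
  ∑ k ∈ Finset.range (n + 1),
    C ((Nat.factorial (n + k) : ℝ)
        / ((Nat.factorial (n - k) : ℝ) * (Nat.factorial k : ℝ))) * X ^ k

open scoped Nat

section NonnegCoeffs

variable (R : Type*) [Semiring R] [PartialOrder R] [IsOrderedRing R]

def nonnegCoeffs : Subsemiring R[X] where
  carrier := {p | ∀ i, 0 ≤ p.coeff i}
  mul_mem' {p q} hp hq i := by
    rw [coeff_mul]
    exact Finset.sum_nonneg fun x _ => mul_nonneg (hp x.1) (hq x.2)
  one_mem' i := by
    rw [coeff_one]
    split_ifs <;> simp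
  add_mem' {p q} hp hq i := by
    rw [coeff_add]
    exact add_nonneg (hp i) (hq i)
  zero_mem' i := by simp

variable {R}

theorem X_mem_nonnegCoeffs : (X : R[X]) ∈ nonnegCoeffs R := fun i => by
  rw [coeff_X]
  split_ifs <;> simp

end NonnegCoeffs

theorem Subsemiring.mul_sub_mul_mem {A : Type*} [Ring A] (S : Subsemiring A) {a a' b b' : A}
    (ha : a ∈ S) (hb' : b' ∈ S) (haa' : a' - a ∈ S) (hbb' : b' - b ∈ S) :
    a' * b' - a * b ∈ S := by
  have h : a' * b' - a * b = (a' - a) * b' + a * (b' - b) := by noncomm_ring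
  rw [h]
  exact add_mem (mul_mem haa' hb') (mul_mem ha hbb')

-- `(n + k)! / (n - k)! = (n + k).descFactorial (2 * k)`, which vanishes for `k > n`.
theorem besselPoly_coeff (n k : ℕ) :
    (besselPoly n).coeff k = ((n + k).descFactorial (2 * k) : ℝ) / k ! := by
  simp only [besselPoly, finsetSum_coeff, coeff_C_mul_X_pow, Finset.sum_ite_eq,
    Finset.mem_range, Nat.lt_succ_iff]
  split_ifs with hk
  · have h := Nat.factorial_mul_descFactorial (show 2 * k ≤ n + k by omega)
    rw [show n + k - 2 * k = n - k by omega] at h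
    rw [← h, Nat.cast_mul, mul_div_mul_left _ _ (by positivity)]
  · rw [Nat.descFactorial_eq_zero_iff_lt.mpr (by omega), Nat.cast_zero, zero_div]

theorem descFactorial_bessel_recurrence (n k : ℕ) :
    (n + k + 2).descFactorial (2 * k + 2) =
      (4 * n + 2) * (k + 1) * (n + k).descFactorial (2 * k) + (n + k).descFactorial (2 * k + 2) := by
  rcases lt_or_ge n k with hnk | hkn
  · rw [Nat.descFactorial_eq_zero_iff_lt.mpr (by omega : n + k + 2 < 2 * k + 2),
      Nat.descFactorial_eq_zero_iff_lt.mpr (by omega : n + k < 2 * k),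
      Nat.descFactorial_eq_zero_iff_lt.mpr (by omega : n + k < 2 * k + 2), mul_zero]
  · obtain ⟨d, rfl⟩ := Nat.exists_eq_add_of_le hkn
    rw [Nat.succ_descFactorial_succ, Nat.succ_descFactorial_succ, Nat.descFactorial_succ,
      Nat.descFactorial_succ, show k + d + k - (2 * k + 1) = d - 1 by omega,
      show k + d + k - 2 * k = d by omega]
    -- `(2k + d + 2)(2k + d + 1) = (4(k + d) + 2)(k + 1) + d (d - 1)`
    rcases d with _ | d
    · ring
    · simp only [Nat.add_sub_cancel]
      ring

theorem besselPoly_zero : besselPoly 0 = 1 := by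
  simp [besselPoly]

theorem besselPoly_succ (n : ℕ) :
    besselPoly (n + 1) = (4 * (n : ℝ[X]) + 2) * X * besselPoly n + besselPoly (n - 1) := by
  rw [show (4 * (n : ℝ[X]) + 2) = C (4 * (n : ℝ) + 2) by simp [map_ofNat]]
  ext (_ | k)
  · simp [besselPoly_coeff]
  · have hpred : (n - 1 + (k + 1)).descFactorial (2 * (k + 1)) =
        (n + k).descFactorial (2 * k + 2) := by
      rcases n with _ | n
      · rw [Nat.descFactorial_eq_zero_iff_lt.mpr (by omega),
          Nat.descFactorial_eq_zero_iff_lt.mpr (by omega)]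
      · congr 1; omega
    rw [coeff_add, mul_assoc, coeff_C_mul, coeff_X_mul, besselPoly_coeff, besselPoly_coeff,
      besselPoly_coeff, hpred, show n + 1 + (k + 1) = n + k + 2 by omega,
      show 2 * (k + 1) = 2 * k + 2 by ring, descFactorial_bessel_recurrence, Nat.factorial_succ]
    push_cast
    field_simp

theorem besselPoly_one : besselPoly 1 = 2 * X + 1 := by
  simpa [besselPoly_zero] using besselPoly_succ 0

theorem besselPoly_add_two (n : ℕ) :
    besselPoly (n + 2) = (4 * (n : ℝ[X]) + 6) * X * besselPoly (n + 1) + besselPoly n := by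
  rw [besselPoly_succ (n + 1), Nat.add_sub_cancel]
  push_cast
  ring

theorem besselPoly_mem_nonnegCoeffs (n : ℕ) : besselPoly n ∈ nonnegCoeffs ℝ := fun k => by
  rw [besselPoly_coeff]
  positivity

theorem besselPoly_sub_mem_nonnegCoeffs {m n : ℕ} (h : m ≤ n) :
    besselPoly n - besselPoly m ∈ nonnegCoeffs ℝ := fun k => by
  rw [coeff_sub, sub_nonneg, besselPoly_coeff, besselPoly_coeff]
  gcongr

noncomputable def besselMinor (m n : ℕ) : ℝ[X] :=
  besselPoly (m - 1) * besselPoly (n + 1) - besselPoly m * besselPoly n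

theorem besselMinor_zero (n : ℕ) :
    besselMinor 0 n = besselPoly 0 * (besselPoly (n + 1) - besselPoly n) := by
  rw [besselMinor, Nat.zero_sub, mul_sub]

theorem besselMinor_one_succ (n : ℕ) :
    besselMinor 1 (n + 1) = 4 * ((n : ℝ[X]) + 1) * X * (besselPoly (n + 1) - besselPoly n)
      + 2 * X * besselPoly n + (besselPoly n - besselPoly (n - 1)) := by
  rw [besselMinor, Nat.sub_self, besselPoly_zero, besselPoly_one, besselPoly_add_two]
  linear_combination -besselPoly_succ n

theorem besselMinor_add_two (m n : ℕ) :
    besselMinor (m + 2) (n + 2) = 4 * ((n : ℝ[X]) + 1 - (m : ℝ[X])) * X *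
        (besselPoly (m + 1) * besselPoly (n + 2) - besselPoly m * besselPoly (n + 1))
      + besselMinor m n := by
  have hn3 := besselPoly_add_two (n + 1)
  rw [show n + 1 + 2 = n + 2 + 1 by omega, show n + 1 + 1 = n + 2 by omega] at hn3
  rw [besselMinor, besselMinor, show m + 2 - 1 = m + 1 by omega, hn3, besselPoly_add_two m]
  push_cast
  linear_combination besselPoly (n + 1) * besselPoly_succ m - besselPoly m * besselPoly_add_two n

theorem besselMinor_mem_nonnegCoeffs {m n : ℕ} (h : m ≤ n) :
    besselMinor m n ∈ nonnegCoeffs ℝ := by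
  induction m using Nat.twoStepInduction generalizing n with
  | zero =>
    rw [besselMinor_zero]
    exact mul_mem (besselPoly_mem_nonnegCoeffs 0) (besselPoly_sub_mem_nonnegCoeffs n.le_succ)
  | one =>
    obtain ⟨n, rfl⟩ : ∃ k, n = k + 1 := ⟨n - 1, by omega⟩
    rw [besselMinor_one_succ]
    refine add_mem (add_mem (mul_mem (mul_mem ?_ X_mem_nonnegCoeffs) ?_) ?_) ?_
    · exact mul_mem (ofNat_mem _ 4) (add_mem (natCast_mem _ n) (one_mem _))
    · exact besselPoly_sub_mem_nonnegCoeffs n.le_succ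
    · exact mul_mem (mul_mem (ofNat_mem _ 2) X_mem_nonnegCoeffs) (besselPoly_mem_nonnegCoeffs n)
    · exact besselPoly_sub_mem_nonnegCoeffs n.pred_le
  | more m ih _ =>
    obtain ⟨n, rfl⟩ : ∃ k, n = k + 2 := ⟨n - 2, by omega⟩
    have hfactor : 4 * ((n : ℝ[X]) + 1 - m) = ((4 * (n + 1 - m) : ℕ) : ℝ[X]) := by
      push_cast [Nat.cast_sub (show m ≤ n + 1 by omega)]
      ring
    rw [besselMinor_add_two, hfactor]
    refine add_mem (mul_mem (mul_mem (natCast_mem _ _) X_mem_nonnegCoeffs) ?_) (ih (by omega))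
    exact Subsemiring.mul_sub_mul_mem _ (besselPoly_mem_nonnegCoeffs m)
      (besselPoly_mem_nonnegCoeffs (n + 2)) (besselPoly_sub_mem_nonnegCoeffs m.le_succ)
      (besselPoly_sub_mem_nonnegCoeffs (n + 1).le_succ)

/-- The Bessel-type polynomials are strongly `q`-log-convex: for all
`n ≥ m ≥ 1`, the polynomial `P_{m-1}·P_{n+1} − P_m·P_n` has nonnegative coefficients. -/
theorem besselPoly_strongly_q_log_convex :
    ∀ m n : ℕ, 1 ≤ m → m ≤ n →
      ∀ i : ℕ,
        0 ≤ (besselPoly (m - 1) * besselPoly (n + 1)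
              - besselPoly m * besselPoly n).coeff i :=
  fun _ _ _ hmn => besselMinor_mem_nonnegCoeffs hmn
end

section
/- Let T(n,k) = (n+k)!/((n-k)!·k!), extended by T(n,k) = 0 for k > n or k < 0. For n ≥ 1, 0 ≤ i ≤ 2n, and 0 ≤ k ≤ ⌊i/2⌋, define β_k(n,i) = T(n+1,k)T(n-1,i-k) + T(n+1,i-k)T(n-1,k) − 2T(n,i-k)T(n,k). Then for each fixed n and i, there exists an integer k' such that β_k(n,i) ≥ 0 for all k ≤ k' and β_k(n,i) ≤ 0 for all k' < k ≤ ⌊i/2⌋. -/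
/-!
The recurrence `T(a+1,b)·(a+1-b) = (a+1+b)·T(a,b)` expresses each of the six factors of
`β_k(n,i)` through `T(n,i-k)` and `T(n,k)`. For `k ≤ i-k ≤ n` this gives
`β_k · (n+1-k)(n+k)(n+1-(i-k))(n+(i-k)) = T(n,i-k)·T(n,k)·N(k)` with positive factors on both
sides, where the quartic `N` collapses to
`2N(k) = (i-2k)²(8n(n+1) - i + 2) + i²(i-2) - 4n(n+1)i`, nonincreasing on `k ≤ i/2` since
`i ≤ 2n`. When `i-k > n` instead, `β_k = T(n+1,i-k)·T(n-1,k) ≥ 0`. So once `β_k < 0`,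
every later `β_k` with `k ≤ ⌊i/2⌋` is `≤ 0`.
-/

open scoped Nat

noncomputable def besselCoeff (a b : ℕ) : ℝ :=
  if b ≤ a then ((a + b)! : ℝ) / ((a - b)! * b !) else 0

lemma besselCoeff_of_lt {a b : ℕ} (h : a < b) : besselCoeff a b = 0 :=
  if_neg h.not_ge

lemma besselCoeff_nonneg (a b : ℕ) : 0 ≤ besselCoeff a b := by
  unfold besselCoeff; split <;> positivity

lemma besselCoeff_pos {a b : ℕ} (h : b ≤ a) : 0 < besselCoeff a b := by
  rw [besselCoeff, if_pos h]; positivity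

lemma besselCoeff_succ_mul (a b : ℕ) :
    besselCoeff (a + 1) b * ((a : ℝ) + 1 - b) = ((a : ℝ) + 1 + b) * besselCoeff a b := by
  rcases le_or_gt b a with h | h
  · obtain ⟨c, rfl⟩ := Nat.exists_eq_add_of_le h
    rw [besselCoeff, besselCoeff, if_pos (by omega), if_pos h,
      show b + c + 1 + b = b + c + b + 1 by omega, show b + c + 1 - b = c + 1 by omega,
      show b + c - b = c by omega, Nat.factorial_succ, Nat.factorial_succ]
    push_cast
    field_simp
    ring
  · rcases (Nat.succ_le_of_lt h).eq_or_lt with rfl | h'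
    · simp [besselCoeff_of_lt h]
    · simp [besselCoeff_of_lt h, besselCoeff_of_lt h']

noncomputable def besselBeta (n i k : ℕ) : ℝ :=
  besselCoeff (n + 1) k * besselCoeff (n - 1) (i - k)
    + besselCoeff (n + 1) (i - k) * besselCoeff (n - 1) k
    - 2 * besselCoeff n (i - k) * besselCoeff n k

def betaNumerator (n i k : ℝ) : ℝ :=
  (n + 1 + k) * (n + k) * (n - (i - k)) * (n + 1 - (i - k))
    + (n + 1 + (i - k)) * (n + (i - k)) * (n - k) * (n + 1 - k)
    - 2 * (n + 1 - k) * (n + k) * (n + 1 - (i - k)) * (n + (i - k))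

lemma two_mul_betaNumerator (n i k : ℝ) :
    2 * betaNumerator n i k = (i - 2 * k) ^ 2 * (8 * n * (n + 1) - (i - 2))
      + (i ^ 2 * (i - 2) - 4 * n * (n + 1) * i) := by
  unfold betaNumerator; ring

lemma betaNumerator_antitoneOn {n i : ℝ} (hi : i ≤ 2 * n) :
    AntitoneOn (betaNumerator n i) (Set.Iic (i / 2)) := by
  intro a ha b hb hab
  have hcoef : 0 < 8 * n * (n + 1) - (i - 2) := by nlinarith [sq_nonneg (4 * n + 1)]
  have hsq : (i - 2 * b) ^ 2 ≤ (i - 2 * a) ^ 2 := by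
    simp only [Set.mem_Iic] at ha hb; nlinarith
  nlinarith [two_mul_betaNumerator n i a, two_mul_betaNumerator n i b,
    mul_le_mul_of_nonneg_right hsq hcoef.le]

lemma besselBeta_nonneg_of_lt {n i k : ℕ} (h : n < i - k) : 0 ≤ besselBeta n i k := by
  rw [besselBeta, besselCoeff_of_lt h, besselCoeff_of_lt (by omega : n - 1 < i - k)]
  simpa using mul_nonneg (besselCoeff_nonneg (n + 1) (i - k)) (besselCoeff_nonneg (n - 1) k)

lemma besselBeta_mul_eq {n : ℕ} (hn : 1 ≤ n) {i k : ℕ} (hk : k ≤ i) :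
    besselBeta n i k * (((n : ℝ) + 1 - k) * ((n : ℝ) + k)
        * ((n : ℝ) + 1 - (i - k)) * ((n : ℝ) + (i - k)))
      = besselCoeff n (i - k) * besselCoeff n k * betaNumerator n i k := by
  obtain ⟨m, rfl⟩ : ∃ m, n = m + 1 := ⟨n - 1, by omega⟩
  have hk₁ := besselCoeff_succ_mul (m + 1) k
  have hj₁ := besselCoeff_succ_mul (m + 1) (i - k)
  have hk₀ := besselCoeff_succ_mul m k
  have hj₀ := besselCoeff_succ_mul m (i - k)
  simp only [besselBeta, betaNumerator, Nat.add_sub_cancel]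
  rw [Nat.cast_sub hk] at hj₁ hj₀
  push_cast at hk₁ hj₁ ⊢
  set P := besselCoeff (m + 1) (i - k)
  set Q := besselCoeff (m + 1) k
  set B := besselCoeff m (i - k)
  set E := besselCoeff m k
  linear_combination
    (B * ((m : ℝ) + 1 + (i - k)) * ((m : ℝ) + 1 + k) * ((m : ℝ) + 2 - (i - k))) * hk₁
    - (((m : ℝ) + 2 + k) * Q * ((m : ℝ) + 1 + k) * ((m : ℝ) + 2 - (i - k))) * hj₀
    + (E * ((m : ℝ) + 1 + k) * ((m : ℝ) + 2 - k) * ((m : ℝ) + 1 + (i - k))) * hj₁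
    - (((m : ℝ) + 2 + (i - k)) * P * ((m : ℝ) + 1 + (i - k)) * ((m : ℝ) + 2 - k)) * hk₀

lemma sign_besselBeta {n i k : ℕ} (hn : 1 ≤ n) (hk : k ≤ n) (hki : k ≤ i) (hj : i - k ≤ n) :
    SignType.sign (besselBeta n i k) = SignType.sign (betaNumerator n i k) := by
  have hD :
      0 < ((n : ℝ) + 1 - k) * ((n : ℝ) + k) * ((n : ℝ) + 1 - (i - k)) * ((n : ℝ) + (i - k)) := by
    have : (k : ℝ) ≤ n := by exact_mod_cast hk
    have : (i : ℝ) - k ≤ n := by rw [← Nat.cast_sub hki]; exact_mod_cast hj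
    have : (0 : ℝ) ≤ i - k := by rw [← Nat.cast_sub hki]; positivity
    have : (1 : ℝ) ≤ n := by exact_mod_cast hn
    apply mul_pos (mul_pos (mul_pos ?_ ?_) ?_) ?_ <;> linarith
  have hP := mul_pos (besselCoeff_pos hj) (besselCoeff_pos hk)
  have h := congrArg SignType.sign (besselBeta_mul_eq hn hki)
  rwa [sign_mul (besselBeta n i k), sign_mul _ (betaNumerator _ _ _), sign_pos hD, sign_pos hP,
    mul_one, one_mul] at h

lemma besselBeta_nonpos_of_neg {n i k₁ k₂ : ℕ} (hn : 1 ≤ n) (hi : i ≤ 2 * n)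
    (hk : k₁ ≤ k₂) (hk₂ : k₂ ≤ i / 2) (h : besselBeta n i k₁ < 0) : besselBeta n i k₂ ≤ 0 := by
  have hj₁ : i - k₁ ≤ n := not_lt.1 fun hlt => (besselBeta_nonneg_of_lt hlt).not_gt h
  have hN₁ : betaNumerator n i k₁ < 0 := by
    rwa [← sign_eq_neg_one_iff, ← sign_besselBeta hn (by omega) (by omega) hj₁, sign_eq_neg_one_iff]
  have hN₂ : betaNumerator n i k₂ ≤ betaNumerator n i k₁ := by
    have hi' : (i : ℝ) ≤ 2 * n := by exact_mod_cast hi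
    have hk₂' : (k₂ : ℝ) ≤ i / 2 := by
      rw [le_div_iff₀ two_pos]; exact_mod_cast (by omega : k₂ * 2 ≤ i)
    have hk' : (k₁ : ℝ) ≤ k₂ := by exact_mod_cast hk
    exact betaNumerator_antitoneOn hi' (hk₂'.trans' hk') hk₂' hk'
  rw [← sign_nonpos_iff, sign_besselBeta hn (by omega) (by omega) (by omega), sign_nonpos_iff]
  exact hN₂.trans hN₁.le

theorem exists_sign_change {α : Type*} [LinearOrder α] [Zero α] {f : ℕ → α} {N : ℕ}
    (hf : ∀ k₁ k₂, k₁ ≤ k₂ → k₂ ≤ N → f k₁ < 0 → f k₂ ≤ 0) :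
    ∃ k' : ℤ, ∀ k ≤ N, ((k : ℤ) ≤ k' → 0 ≤ f k) ∧ (k' < k → f k ≤ 0) := by
  classical
  by_cases h : ∃ k, k ≤ N ∧ f k < 0
  · refine ⟨Nat.find h - 1, fun k hk => ⟨fun hle => ?_, fun hlt => ?_⟩⟩
    · exact not_lt.1 fun hneg => Nat.find_min h (by omega) ⟨hk, hneg⟩
    · exact hf _ _ (by omega) hk (Nat.find_spec h).2
  · push Not at h
    exact ⟨N, fun k hk => ⟨fun _ => h k hk, fun hlt => absurd hlt (by omega)⟩⟩

/-- Let `T(n,k) = (n+k)!/((n-k)!·k!)`, extended by `0` for `k > n`.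
For `n ≥ 1`, `0 ≤ i ≤ 2n` and `0 ≤ k ≤ ⌊i/2⌋`, let
`β_k(n,i) = T(n+1,k)T(n-1,i-k) + T(n+1,i-k)T(n-1,k) − 2T(n,i-k)T(n,k)`.
Then for each fixed `n` and `i` there is an integer `k'` with `β_k(n,i) ≥ 0` for
`k ≤ k'` and `β_k(n,i) ≤ 0` for `k' < k ≤ ⌊i/2⌋`. -/
theorem bessel_beta_sign_change
    (T : ℕ → ℕ → ℝ)
    (hT : ∀ a b : ℕ, T a b =
      if b ≤ a then (Nat.factorial (a + b) : ℝ)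
        / ((Nat.factorial (a - b) : ℝ) * (Nat.factorial b : ℝ)) else 0)
    (n i : ℕ) (hn : 1 ≤ n) (hi : i ≤ 2 * n)
    (β : ℕ → ℝ)
    (hβ : ∀ k : ℕ, β k =
      T (n + 1) k * T (n - 1) (i - k) + T (n + 1) (i - k) * T (n - 1) k
        - 2 * T n (i - k) * T n k) :
    ∃ k' : ℤ, ∀ k : ℕ, k ≤ i / 2 →
      ((k : ℤ) ≤ k' → 0 ≤ β k) ∧ (k' < (k : ℤ) → β k ≤ 0) := by
  obtain rfl : T = besselCoeff := funext₂ hT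
  obtain rfl : β = besselBeta n i := funext hβ
  exact exists_sign_change fun k₁ k₂ hk hk₂ => besselBeta_nonpos_of_neg hn hi hk hk₂
end
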